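/- There is a computably enumerable set A ⊆ ℕ such that for every computably enumerable set W, the upper density of the symmetric difference of A and the complement of W equals 1. -/

import Mathlib

open Filter

noncomputable def pdens (S : Set ℕ) (n : ℕ) : ℝ := (S ∩ Set.Iio n).ncard / n

noncomputable def lowerDensity (S : Set ℕ) : ℝ := liminf (pdens S) atTop

noncomputable def upperDensity (S : Set ℕ) : ℝ := limsup (pdens S) atTop
/-!
The set `A = ⋃ₙ (Wₙ ∩ [n!, (n+1)!))` is c.e. because the block containing `m` is computable from
`m`. If the enumeration lists every c.e. set `W` infinitely often, then `A` agrees with `W` on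
infinitely many blocks `[n!, (n+1)!)`; each of them lies in `A ∆ Wᶜ` and fills the fraction
`n / (n+1)` of `[0, (n+1)!)`, so the upper density of `A ∆ Wᶜ` is `1`.
-/

open scoped Nat
open Nat.Partrec Code

theorem pdens_nonneg (S : Set ℕ) (n : ℕ) : 0 ≤ pdens S n := by
  unfold pdens; positivity

theorem pdens_le_one (S : Set ℕ) (n : ℕ) : pdens S n ≤ 1 := by
  unfold pdens
  refine div_le_one_of_le₀ ?_ n.cast_nonneg
  exact_mod_cast (Set.ncard_le_ncard Set.inter_subset_right (Set.finite_Iio n)).trans_eq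
    (Set.ncard_Iio_nat n)

theorem div_le_pdens_of_Ico_subset {S : Set ℕ} {a b : ℕ} (h : Set.Ico a b ⊆ S) :
    ((b - a : ℕ) : ℝ) / b ≤ pdens S b := by
  unfold pdens
  gcongr
  rw [← Set.ncard_Ico_nat]
  exact Set.ncard_le_ncard (fun m hm => ⟨h hm, hm.2⟩) ((Set.finite_Iio b).inter_of_right S)

theorem upperDensity_eq_one_of_frequently {S : Set ℕ}
    (h : ∀ a < 1, ∃ᶠ n in atTop, a ≤ pdens S n) : upperDensity S = 1 := by
  have h_le : ∀ᶠ n in atTop, pdens S n ≤ 1 := Eventually.of_forall (pdens_le_one S)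
  refine le_antisymm ?_ (le_of_forall_lt_imp_le_of_dense fun a ha => ?_)
  · exact limsup_le_of_le (isCoboundedUnder_le_of_le atTop (pdens_nonneg S)) h_le
  · exact le_limsup_of_frequently_le (h a ha) ⟨1, h_le⟩

theorem factorial_succ_sub_factorial (n : ℕ) : (n + 1)! - n ! = n * n ! := by
  rw [Nat.factorial_succ, Nat.succ_mul, Nat.add_sub_cancel]

theorem upperDensity_eq_one_of_frequently_Ico_factorial_subset {S : Set ℕ}
    (h : ∃ᶠ n in atTop, Set.Ico n ! (n + 1)! ⊆ S) : upperDensity S = 1 := by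
  refine upperDensity_eq_one_of_frequently fun a ha => ?_
  have h_block : ∃ᶠ n in atTop, a ≤ pdens S (n + 1)! := by
    have h_ratio : ∀ᶠ n : ℕ in atTop, a < n / (n + 1 : ℝ) :=
      (tendsto_natCast_div_add_atTop (1 : ℝ)).eventually_const_lt ha
    refine (h.and_eventually h_ratio).mono fun n ⟨h_sub, h_lt⟩ => h_lt.le.trans ?_
    refine le_of_eq_of_le ?_ (div_le_pdens_of_Ico_subset h_sub)
    rw [factorial_succ_sub_factorial, Nat.factorial_succ]
    push_cast
    field_simp
  exact (factorial_tendsto_atTop.comp (tendsto_add_atTop_nat 1)).frequently h_block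

theorem Primrec.factorial : Primrec Nat.factorial := by
  refine (Primrec.nat_rec₁ 1 (Primrec.nat_mul.comp₂ (Primrec.succ.comp₂ Primrec₂.left)
    Primrec₂.right)).of_eq fun n => ?_
  induction n with
  | zero => rfl
  | succ n ih => simp [Nat.factorial_succ, ih]

-- `0` lies in no block `[n!, (n+1)!)`; there the value is the junk `0`.
def factorialBlock (m : ℕ) : ℕ := Nat.findGreatest (fun n => n ! ≤ m) m

theorem Primrec.factorialBlock : Primrec factorialBlock :=
  Primrec.nat_findGreatest Primrec.id
    (Primrec.nat_le.comp (Primrec.factorial.comp Primrec.snd) Primrec.fst)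

theorem factorialBlock_eq {n m : ℕ} (h₁ : n ! ≤ m) (h₂ : m < (n + 1)!) : factorialBlock m = n :=
  Nat.findGreatest_eq_iff.2 ⟨(Nat.self_le_factorial n).trans h₁, fun _ => h₁,
    fun _ hk _ hk' => h₂.not_ge ((Nat.factorial_le hk).trans hk')⟩

/-- An enumeration of the c.e. sets in which `ceSet (pair i j)` is the domain of the `i`-th code,
so every c.e. set occurs infinitely often. -/
def ceSet (n : ℕ) : Set ℕ := {m | (eval (Denumerable.ofNat Code n.unpair.1) m).Dom}

theorem exists_forall_ceSet_pair_eq {W : Set ℕ} (hW : REPred (· ∈ W)) :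
    ∃ i, ∀ j, ceSet (Nat.pair i j) = W := by
  obtain ⟨c, hc⟩ := exists_code.1 (Partrec.nat_iff.1 (hW.map (Computable.const 0).to₂))
  refine ⟨Encodable.encode c, fun j => Set.ext fun m => ?_⟩
  simp [ceSet, hc, Part.assert]

def blockUnion : Set ℕ := {m | m ∈ ceSet (factorialBlock m)}

theorem mem_blockUnion_iff {n m : ℕ} (h₁ : n ! ≤ m) (h₂ : m < (n + 1)!) :
    m ∈ blockUnion ↔ m ∈ ceSet n := by
  rw [blockUnion, Set.mem_ofPred_eq, factorialBlock_eq h₁ h₂]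

theorem rePred_blockUnion : REPred (· ∈ blockUnion) := by
  have h_code : Computable fun m => Denumerable.ofNat Code (factorialBlock m).unpair.1 :=
    (Computable.ofNat Code).comp
      (Primrec.fst.comp (Primrec.unpair.comp Primrec.factorialBlock)).to_comp
  exact (eval_part.comp h_code Computable.id).dom_re

theorem subset_symmDiff_compl_of_forall_mem_iff {α : Type*} {A W I : Set α}
    (h : ∀ m ∈ I, m ∈ A ↔ m ∈ W) :
    I ⊆ symmDiff A Wᶜ := fun m hm => by
  have := h m hm
  rw [Set.mem_symmDiff, Set.mem_compl_iff]
  tauto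

theorem stmt16 :
    ∃ A : Set ℕ, REPred (· ∈ A) ∧
      ∀ W : Set ℕ, REPred (· ∈ W) → upperDensity (symmDiff A Wᶜ) = 1 := by
  refine ⟨blockUnion, rePred_blockUnion, fun W hW => ?_⟩
  obtain ⟨i, hi⟩ := exists_forall_ceSet_pair_eq hW
  apply upperDensity_eq_one_of_frequently_Ico_factorial_subset
  have h_pair : Tendsto (Nat.pair i) atTop atTop :=
    tendsto_atTop_mono (Nat.right_le_pair i) tendsto_id
  refine h_pair.frequently (Frequently.of_forall fun j => ?_)
  refine subset_symmDiff_compl_of_forall_mem_iff fun m hm => ?_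
  rw [mem_blockUnion_iff hm.1 hm.2, hi]
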